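/- arXiv:1405.2969 — 4 statements merged into one kernel-verified Lean document; each statement's English description precedes it below -/
import Mathlib

section
/- For every x ∈ ℝ² with |x₁|⁴ + |x₂|⁴ = 1, one has (|x₁ + x₂|^{4/3} + |x₁ - x₂|^{4/3})^{3/4} < 1.74. -/
lemma T24_key (c g : ℝ) (hc0 : 0 ≤ c) (hc1 : c ≤ 1) (hg0 : 0 ≤ g)
    (heq : g ^ 3 = 8 - 6 * c ^ 3 + 3 * c ^ 2 * g) : g ≤ 209 / 100 := by
  by_contra hcon
  push_neg at hcon
  nlinarith [mul_nonneg (sq_nonneg (c - 209/300)) (by linarith : (0:ℝ) ≤ c + 209/600),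
    mul_nonneg (by linarith : (0:ℝ) ≤ g - 209/100)
      (by nlinarith : (0:ℝ) ≤ g^2 + (209/100)*g + (209/100)^2 - 3*c^2)]

theorem T24_lt (x1 x2 : ℝ) (h : |x1| ^ (4 : ℕ) + |x2| ^ (4 : ℕ) = 1) :
    (|x1 + x2| ^ ((4 : ℝ) / 3) + |x1 - x2| ^ ((4 : ℝ) / 3)) ^ ((3 : ℝ) / 4) < 1.74 := by
  have hx : x1 ^ 4 + x2 ^ 4 = 1 := by
    have e1 : |x1| ^ (4:ℕ) = x1 ^ 4 := by rw [← abs_pow]; exact abs_of_nonneg (by positivity)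
    have e2 : |x2| ^ (4:ℕ) = x2 ^ 4 := by rw [← abs_pow]; exact abs_of_nonneg (by positivity)
    rw [e1, e2] at h; exact h
  set a := |x1 + x2| with ha_def
  set b := |x1 - x2| with hb_def
  have ha : 0 ≤ a := abs_nonneg _
  have hb : 0 ≤ b := abs_nonneg _
  set c : ℝ := (a * b) ^ ((2 : ℝ) / 3) with hc_def
  have hab : 0 ≤ a * b := mul_nonneg ha hb
  have hc0 : 0 ≤ c := Real.rpow_nonneg hab _
  have hc3 : c ^ (3 : ℕ) = (a * b) ^ (2 : ℕ) := by
    rw [hc_def, ← Real.rpow_natCast ((a*b) ^ ((2:ℝ)/3)) 3, ← Real.rpow_mul hab,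
      show (2:ℝ)/3 * (3:ℕ) = ((2:ℕ):ℝ) by norm_num, Real.rpow_natCast]
  have habsq : (a * b) ^ (2:ℕ) = (x1 ^ 2 - x2 ^ 2) ^ 2 := by
    rw [ha_def, hb_def, ← abs_mul, sq_abs]; ring
  have hc3w : c ^ (3:ℕ) ≤ 1 := by
    rw [hc3, habsq]; nlinarith [sq_nonneg (x1*x2), sq_nonneg (x1^2 + x2^2)]
  have hc1 : c ≤ 1 := by nlinarith [sq_nonneg (c-1), sq_nonneg (c+1)]
  set p : ℝ := a ^ ((4:ℝ)/3) with hp_def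
  set q : ℝ := b ^ ((4:ℝ)/3) with hq_def
  have hp0 : 0 ≤ p := Real.rpow_nonneg ha _
  have hq0 : 0 ≤ q := Real.rpow_nonneg hb _
  have hp3 : p ^ (3:ℕ) = a ^ (4:ℕ) := by
    rw [hp_def, ← Real.rpow_natCast (a ^ ((4:ℝ)/3)) 3, ← Real.rpow_mul ha,
      show (4:ℝ)/3 * (3:ℕ) = ((4:ℕ):ℝ) by norm_num, Real.rpow_natCast]
  have hq3 : q ^ (3:ℕ) = b ^ (4:ℕ) := by
    rw [hq_def, ← Real.rpow_natCast (b ^ ((4:ℝ)/3)) 3, ← Real.rpow_mul hb,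
      show (4:ℝ)/3 * (3:ℕ) = ((4:ℕ):ℝ) by norm_num, Real.rpow_natCast]
  have hpq : p * q = c ^ (2:ℕ) := by
    rw [hp_def, hq_def, ← Real.mul_rpow ha hb, hc_def,
      ← Real.rpow_natCast ((a*b) ^ ((2:ℝ)/3)) 2, ← Real.rpow_mul hab]
    norm_num
  have hsum : a ^ (4:ℕ) + b ^ (4:ℕ) = 8 - 6 * c ^ (3:ℕ) := by
    rw [hc3, habsq, ha_def, hb_def, ← abs_pow, ← abs_pow,
      abs_of_nonneg (show (0:ℝ) ≤ (x1+x2)^4 by positivity),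
      abs_of_nonneg (show (0:ℝ) ≤ (x1-x2)^4 by positivity)]
    nlinarith [hx]
  set g : ℝ := p + q with hg_def
  have hg0 : 0 ≤ g := by positivity
  have hgeq : g ^ (3:ℕ) = 8 - 6 * c ^ (3:ℕ) + 3 * c ^ (2:ℕ) * g := by
    have e : g ^ (3:ℕ) = p ^ (3:ℕ) + q ^ (3:ℕ) + 3 * (p*q) * (p+q) := by rw [hg_def]; ring
    rw [e, hp3, hq3, hpq, ← hsum]
  have hgle : g ≤ 209/100 := T24_key c g hc0 hc1 hg0 hgeq
  have hkey : g ^ (3:ℕ) < (1.74:ℝ) ^ (4:ℕ) := by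
    have h3 : g ^ (3:ℕ) ≤ ((209:ℝ)/100) ^ (3:ℕ) := pow_le_pow_left₀ hg0 hgle 3
    norm_num at h3 ⊢
    linarith
  have hfin : (g ^ ((3:ℝ)/4)) ^ (4:ℕ) = g ^ (3:ℕ) := by
    rw [← Real.rpow_natCast (g ^ ((3:ℝ)/4)) 4, ← Real.rpow_mul hg0,
      show (3:ℝ)/4 * (4:ℕ) = ((3:ℕ):ℝ) by norm_num, Real.rpow_natCast]
  exact lt_of_pow_lt_pow_left₀ 4 (by norm_num : (0:ℝ) ≤ (1.74:ℝ)) (by rw [hfin]; exact hkey)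
end

section
/- For every x ∈ ℝ² with |x₁|⁴ + |x₂|⁴ = 1, one has (|x₁ + x₂|^{4/3} + |x₁ - x₂|^{4/3})^{3/4} ≤ √3, with equality attained (e.g., at x₁ = x₂ = 2^{-1/4}). -/
private lemma aux_rpow_pow (c : ℝ) (hc : 0 ≤ c) (x : ℝ) (n : ℕ) :
    (c ^ x) ^ n = c ^ (x * n) := by
  rw [← Real.rpow_natCast (c ^ x) n, ← Real.rpow_mul hc]

private lemma nine_rpow_quarter : (9 : ℝ) ^ ((1 : ℝ)/4) = Real.sqrt 3 := by
  have h3 : (0:ℝ) ≤ 3 := by norm_num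
  rw [show (9:ℝ) = 3 ^ (2:ℕ) by norm_num, ← Real.rpow_natCast 3 2,
    ← Real.rpow_mul h3, Real.sqrt_eq_rpow]
  norm_num

private lemma abs_pow_four (y : ℝ) : |y| ^ (4 : ℕ) = y ^ (4 : ℕ) := by
  rw [← abs_pow, abs_of_nonneg (by positivity)]

theorem T24_eq_sqrt_three :
    (∀ x1 x2 : ℝ, |x1| ^ (4 : ℕ) + |x2| ^ (4 : ℕ) = 1 →
      (|x1 + x2| ^ ((4 : ℝ) / 3) + |x1 - x2| ^ ((4 : ℝ) / 3)) ^ ((3 : ℝ) / 4) ≤ Real.sqrt 3)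
    ∧ (∃ x1 x2 : ℝ, |x1| ^ (4 : ℕ) + |x2| ^ (4 : ℕ) = 1 ∧
      (|x1 + x2| ^ ((4 : ℝ) / 3) + |x1 - x2| ^ ((4 : ℝ) / 3)) ^ ((3 : ℝ) / 4) = Real.sqrt 3) := by
  constructor
  · -- Inequality part
    intro x1 x2 h
    rw [abs_pow_four, abs_pow_four] at h
    set a : ℝ := |x1 + x2| with ha_def
    set b : ℝ := |x1 - x2| with hb_def
    have ha : 0 ≤ a := abs_nonneg _
    have hb : 0 ≤ b := abs_nonneg _
    have key : a ^ (4:ℕ) + b ^ (4:ℕ) + 6 * (a ^ 2 * b ^ 2) = 8 := by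
      have e1 : a ^ (4:ℕ) = (x1 + x2) ^ (4:ℕ) := abs_pow_four _
      have e2 : b ^ (4:ℕ) = (x1 - x2) ^ (4:ℕ) := abs_pow_four _
      have e3 : a ^ 2 = (x1 + x2) ^ 2 := sq_abs _
      have e4 : b ^ 2 = (x1 - x2) ^ 2 := sq_abs _
      rw [e1, e2, e3, e4]
      linear_combination 8 * h
    set u : ℝ := a ^ ((4:ℝ)/3) with hu_def
    set v : ℝ := b ^ ((4:ℝ)/3) with hv_def
    set r : ℝ := (a * b) ^ ((2:ℝ)/3) with hr_def
    have hu : 0 ≤ u := Real.rpow_nonneg ha _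
    have hv : 0 ≤ v := Real.rpow_nonneg hb _
    have hr : 0 ≤ r := Real.rpow_nonneg (by positivity) _
    have hu3 : u ^ (3:ℕ) = a ^ (4:ℕ) := by
      rw [hu_def, aux_rpow_pow a ha, show (4:ℝ)/3 * (3:ℕ) = ((4:ℕ):ℝ) by norm_num,
        Real.rpow_natCast]
    have hv3 : v ^ (3:ℕ) = b ^ (4:ℕ) := by
      rw [hv_def, aux_rpow_pow b hb, show (4:ℝ)/3 * (3:ℕ) = ((4:ℕ):ℝ) by norm_num,
        Real.rpow_natCast]
    have hr3 : r ^ (3:ℕ) = a ^ 2 * b ^ 2 := by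
      rw [hr_def, aux_rpow_pow (a*b) (by positivity), show (2:ℝ)/3 * (3:ℕ) = ((2:ℕ):ℝ) by norm_num,
        Real.rpow_natCast, mul_pow]
    have hr2 : r ^ (2:ℕ) = u * v := by
      rw [hr_def, aux_rpow_pow (a*b) (by positivity), show (2:ℝ)/3 * (2:ℕ) = (4:ℝ)/3 by norm_num,
        hu_def, hv_def, ← Real.mul_rpow ha hb]
    set p : ℝ := u + v with hp_def
    have hp : 0 ≤ p := by positivity
    have h8 : p ^ 3 - 3 * p * r ^ 2 + 6 * r ^ 3 = 8 := by
      have : p ^ 3 - 3 * p * (u * v) = u ^ 3 + v ^ 3 := by rw [hp_def]; ring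
      rw [hr2, hr3, this, hu3, hv3]
      linarith [key]
    have hfac : 9 * (p ^ 3 - 3 * p * r ^ 2 + 6 * r ^ 3) - 8 * p ^ 3
        = (3 * r - p) ^ 2 * (6 * r + p) := by ring
    have hp9 : p ^ (3:ℕ) ≤ 9 := by
      nlinarith [sq_nonneg (3 * r - p), mul_nonneg (sq_nonneg (3 * r - p)) (by linarith : (0:ℝ) ≤ 6 * r + p)]
    have hrw : p ^ ((3:ℝ)/4) = (p ^ (3:ℕ)) ^ ((1:ℝ)/4) := by
      rw [← Real.rpow_natCast p 3, ← Real.rpow_mul hp]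
      norm_num
    rw [hrw, ← nine_rpow_quarter]
    exact Real.rpow_le_rpow (by positivity) hp9 (by norm_num)
  · -- Equality part
    have h5 : Real.sqrt 5 ^ 2 = 5 := Real.sq_sqrt (by norm_num)
    have h5nn : (0:ℝ) ≤ Real.sqrt 5 := Real.sqrt_nonneg 5
    have h5gt : 2 < Real.sqrt 5 := by nlinarith [h5, h5nn]
    have h5lt : Real.sqrt 5 < 9/4 := by nlinarith [h5, h5nn]
    set t : ℝ := Real.sqrt 5 with ht_def
    have hA : (0:ℝ) < 27 - 12 * t := by nlinarith
    set s : ℝ := (27 - 12 * t) ^ (-(1:ℝ)/4) with hs_def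
    have hs : 0 < s := Real.rpow_pos_of_pos hA _
    have hs4 : s ^ (4:ℕ) = (27 - 12 * t)⁻¹ := by
      rw [hs_def, aux_rpow_pow _ hA.le, show -(1:ℝ)/4 * (4:ℕ) = -1 by norm_num,
        Real.rpow_neg_one]
    set c : ℝ := t - 2 with hc_def
    have hc : 0 < c := by simp only [hc_def]; linarith
    refine ⟨s * (1 + c) / 2, s * (1 - c) / 2, ?_, ?_⟩
    · -- constraint
      rw [abs_pow_four, abs_pow_four]
      have : (s * (1 + c) / 2) ^ (4:ℕ) + (s * (1 - c) / 2) ^ (4:ℕ)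
          = s ^ (4:ℕ) * (27 - 12 * t) := by
        rw [hc_def]
        linear_combination (s^4/16) * (2*t^2 - 16*t + 70) * h5
      rw [this, hs4, inv_mul_cancel₀ (ne_of_gt hA)]
    · -- value
      have hsum : s * (1 + c) / 2 + s * (1 - c) / 2 = s := by ring
      have hdiff : s * (1 + c) / 2 - s * (1 - c) / 2 = s * c := by ring
      rw [hsum, hdiff, abs_of_pos hs, abs_of_pos (by positivity : 0 < s * c)]
      -- c ^ (4/3) = (7 - 3t)/2, via c = g^3 with g = (t-1)/2
      set g : ℝ := (t - 1) / 2 with hg_def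
      have hg : 0 ≤ g := by simp only [hg_def]; linarith
      have hcg : c = g ^ (3:ℕ) := by
        rw [hc_def, hg_def]; linear_combination ((3 - t)/8) * h5
      have hc43 : c ^ ((4:ℝ)/3) = (7 - 3 * t) / 2 := by
        rw [hcg, ← Real.rpow_natCast g 3, ← Real.rpow_mul hg,
          show (3:ℕ) * ((4:ℝ)/3) = ((4:ℕ):ℝ) by norm_num, Real.rpow_natCast]
        rw [hg_def]; linear_combination ((t^2 - 4*t + 11)/16) * h5
      have hs43 : s ^ ((4:ℝ)/3) = (27 - 12 * t) ^ (-(1:ℝ)/3) := by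
        rw [hs_def, ← Real.rpow_mul hA.le]
        norm_num
      have hsc : (s * c) ^ ((4:ℝ)/3) = s ^ ((4:ℝ)/3) * c ^ ((4:ℝ)/3) :=
        Real.mul_rpow hs.le hc.le
      set E : ℝ := (s ^ ((4:ℝ)/3) + (s * c) ^ ((4:ℝ)/3)) ^ ((3:ℝ)/4) with hE_def
      have hinner : 0 ≤ s ^ ((4:ℝ)/3) + (s * c) ^ ((4:ℝ)/3) := by positivity
      have hE : 0 ≤ E := Real.rpow_nonneg hinner _
      have hE4 : E ^ (4:ℕ) = (Real.sqrt 3) ^ (4:ℕ) := by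
        have hrt3 : (Real.sqrt 3) ^ (4:ℕ) = 9 := by
          have : Real.sqrt 3 ^ 2 = 3 := Real.sq_sqrt (by norm_num)
          nlinarith [this]
        rw [hrt3, hE_def, aux_rpow_pow _ hinner, show (3:ℝ)/4 * (4:ℕ) = ((3:ℕ):ℝ) by norm_num,
          Real.rpow_natCast]
        -- (s^{4/3} + (sc)^{4/3})^3 = 9
        rw [hsc, hc43, hs43]
        have hA3 : ((27 - 12*t) ^ (-(1:ℝ)/3)) ^ (3:ℕ) = (27 - 12*t)⁻¹ := by
          rw [aux_rpow_pow _ hA.le, show -(1:ℝ)/3 * (3:ℕ) = -1 by norm_num, Real.rpow_neg_one]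
        set A3 : ℝ := (27 - 12*t) ^ (-(1:ℝ)/3) with hA3_def
        have expand : (A3 + A3 * ((7 - 3*t)/2)) ^ (3:ℕ)
            = A3 ^ (3:ℕ) * ((9 - 3*t)/2) ^ (3:ℕ) := by ring
        rw [expand, hA3]
        have h93 : ((9 - 3*t)/2) ^ (3:ℕ) = 9 * (27 - 12*t) := by
          linear_combination (27*(9 - t)/8) * h5
        rw [h93]
        field_simp
      exact (pow_left_inj₀ hE (Real.sqrt_nonneg 3) (by norm_num)).mp hE4
end

section
/- Define f(x) = ((x + (1 - x⁴)^{1/4})^{4/3} + ((1 - x⁴)^{1/4} - x)^{4/3})^{3/4} for x ∈ [0, 2^{-1/4}]. Then sup_{x ∈ [0, 2^{-1/4}]} f(x) ≤ √3. -/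
lemma key_poly (u v : ℝ) (hu : 0 ≤ u) (hv : 0 ≤ v) :
    24*u^2*v^2*(u-v)^2 ≤ u^6 + 6*u^3*v^3 + v^6 := by
  have h2 : 0 ≤ u^2 + 6*u*v + v^2 := by positivity
  nlinarith [mul_nonneg (sq_nonneg (u^2 - 3*u*v + v^2)) h2]

theorem f_le_sqrt_three (x : ℝ) (hx : x ∈ Set.Icc (0 : ℝ) ((2 : ℝ) ^ (-(1 : ℝ) / 4))) :
    ((x + (1 - x ^ (4 : ℕ)) ^ ((1 : ℝ) / 4)) ^ ((4 : ℝ) / 3)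
      + ((1 - x ^ (4 : ℕ)) ^ ((1 : ℝ) / 4) - x) ^ ((4 : ℝ) / 3)) ^ ((3 : ℝ) / 4)
    ≤ Real.sqrt 3 := by
  obtain ⟨hx0, hx1⟩ := hx
  have h214 : ((2:ℝ) ^ (-(1:ℝ) / 4)) ^ (4:ℕ) = 1/2 := by
    rw [← Real.rpow_natCast ((2:ℝ) ^ (-(1:ℝ)/4)) 4, ← Real.rpow_mul (by norm_num : (0:ℝ) ≤ 2)]
    norm_num
  have hx4 : x ^ (4:ℕ) ≤ 1/2 := by
    calc x ^ (4:ℕ) ≤ ((2:ℝ) ^ (-(1:ℝ)/4)) ^ (4:ℕ) := pow_le_pow_left₀ hx0 hx1 4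
    _ = 1/2 := h214
  have h1x4 : (0:ℝ) ≤ 1 - x ^ (4:ℕ) := by linarith
  set y : ℝ := (1 - x ^ (4:ℕ)) ^ ((1:ℝ)/4) with hy_def
  have hy0 : 0 ≤ y := Real.rpow_nonneg h1x4 _
  have hy4 : y ^ (4:ℕ) = 1 - x ^ (4:ℕ) := by
    rw [hy_def, ← Real.rpow_natCast ((1 - x ^ (4:ℕ)) ^ ((1:ℝ)/4)) 4,
      ← Real.rpow_mul h1x4]
    norm_num
  have hyx : x ≤ y := by
    apply le_of_pow_le_pow_left₀ (n := 4) (by norm_num) hy0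
    rw [hy4]; linarith
  set A : ℝ := x + y with hA_def
  set B : ℝ := y - x with hB_def
  have hA0 : 0 ≤ A := by positivity
  have hB0 : 0 ≤ B := by simp [hB_def]; linarith
  set u : ℝ := A ^ ((2:ℝ)/3) with hu_def
  set v : ℝ := B ^ ((2:ℝ)/3) with hv_def
  have hu0 : 0 ≤ u := Real.rpow_nonneg hA0 _
  have hv0 : 0 ≤ v := Real.rpow_nonneg hB0 _
  have hAu : A ^ ((4:ℝ)/3) = u ^ (2:ℕ) := by
    rw [hu_def, ← Real.rpow_natCast (A ^ ((2:ℝ)/3)) 2, ← Real.rpow_mul hA0]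
    norm_num
  have hBv : B ^ ((4:ℝ)/3) = v ^ (2:ℕ) := by
    rw [hv_def, ← Real.rpow_natCast (B ^ ((2:ℝ)/3)) 2, ← Real.rpow_mul hB0]
    norm_num
  have hu3 : u ^ (3:ℕ) = A ^ (2:ℕ) := by
    rw [hu_def, ← Real.rpow_natCast (A ^ ((2:ℝ)/3)) 3, ← Real.rpow_mul hA0]
    norm_num
  have hv3 : v ^ (3:ℕ) = B ^ (2:ℕ) := by
    rw [hv_def, ← Real.rpow_natCast (B ^ ((2:ℝ)/3)) 3, ← Real.rpow_mul hB0]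
    norm_num
  have hu6 : u ^ (6:ℕ) = A ^ (4:ℕ) := by
    have : u ^ (6:ℕ) = (u ^ (3:ℕ)) ^ (2:ℕ) := by ring
    rw [this, hu3]; ring
  have hv6 : v ^ (6:ℕ) = B ^ (4:ℕ) := by
    have : v ^ (6:ℕ) = (v ^ (3:ℕ)) ^ (2:ℕ) := by ring
    rw [this, hv3]; ring
  have h8 : u^6 + 6*u^3*v^3 + v^6 = 8 := by
    rw [hu6, hv6, hu3, hv3, hA_def, hB_def]
    linear_combination (8:ℝ) * hy4
  have hkey : 3*u^2*v^2*(u-v)^2 ≤ 1 := by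
    have := key_poly u v hu0 hv0
    linarith
  have hsum : (u^2 + v^2)^(3:ℕ) ≤ 9 := by nlinarith [hkey, h8]
  have h32 : (0:ℝ) ≤ (3:ℝ) ^ ((2:ℝ)/3) := Real.rpow_nonneg (by norm_num) _
  have h9 : ((3:ℝ) ^ ((2:ℝ)/3)) ^ (3:ℕ) = 9 := by
    rw [← Real.rpow_natCast ((3:ℝ) ^ ((2:ℝ)/3)) 3, ← Real.rpow_mul (by norm_num : (0:ℝ) ≤ 3)]
    norm_num
  have hle : u^2 + v^2 ≤ (3:ℝ) ^ ((2:ℝ)/3) := by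
    apply le_of_pow_le_pow_left₀ (n := 3) (by norm_num) h32
    rw [h9]; exact hsum
  rw [hAu, hBv]
  calc ((u ^ (2:ℕ)) + (v ^ (2:ℕ))) ^ ((3:ℝ)/4)
      ≤ ((3:ℝ) ^ ((2:ℝ)/3)) ^ ((3:ℝ)/4) := by
        apply Real.rpow_le_rpow (by positivity) (by exact_mod_cast hle) (by norm_num)
    _ = Real.sqrt 3 := by
        rw [← Real.rpow_mul (by norm_num : (0:ℝ) ≤ 3), Real.sqrt_eq_rpow]
        norm_num
end

section
/- Define g(x) = ((x + (1 - x⁴)^{1/4})^{4/3} + (x - (1 - x⁴)^{1/4})^{4/3})^{3/4} for x ∈ [2^{-1/4}, 1]. Then sup_{x ∈ [2^{-1/4}, 1]} g(x) ≤ √3. -/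
theorem g_le_sqrt_three (x : ℝ) (hx : x ∈ Set.Icc ((2 : ℝ) ^ (-(1 : ℝ) / 4)) 1) :
    ((x + (1 - x ^ (4 : ℕ)) ^ ((1 : ℝ) / 4)) ^ ((4 : ℝ) / 3)
      + (x - (1 - x ^ (4 : ℕ)) ^ ((1 : ℝ) / 4)) ^ ((4 : ℝ) / 3)) ^ ((3 : ℝ) / 4)
    ≤ Real.sqrt 3 := by
  obtain ⟨hx1, hx2⟩ := hx
  set y : ℝ := (1 - x ^ (4 : ℕ)) ^ ((1 : ℝ) / 4) with hy
  have hx0 : (0:ℝ) < x := lt_of_lt_of_le (Real.rpow_pos_of_pos two_pos _) hx1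
  have h1x : (0:ℝ) ≤ 1 - x ^ (4:ℕ) := by
    have : x ^ (4:ℕ) ≤ 1 := by
      calc x ^ (4:ℕ) ≤ 1 ^ (4:ℕ) := pow_le_pow_left₀ hx0.le hx2 4
        _ = 1 := one_pow 4
    linarith
  have hy4 : y ^ (4:ℕ) = 1 - x ^ (4:ℕ) := by
    rw [hy, ← Real.rpow_natCast ((1 - x ^ (4:ℕ)) ^ ((1:ℝ)/4)) 4, ← Real.rpow_mul h1x]
    norm_num
  have hy0 : 0 ≤ y := Real.rpow_nonneg h1x _
  clear_value y
  have hx4 : (1:ℝ)/2 ≤ x ^ (4:ℕ) := by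
    have h : ((2:ℝ) ^ (-(1:ℝ)/4)) ^ (4:ℕ) = 1/2 := by
      rw [← Real.rpow_natCast ((2:ℝ) ^ (-(1:ℝ)/4)) 4, ← Real.rpow_mul (by norm_num)]
      norm_num
    calc (1:ℝ)/2 = ((2:ℝ) ^ (-(1:ℝ)/4)) ^ (4:ℕ) := h.symm
      _ ≤ x ^ (4:ℕ) := pow_le_pow_left₀ (Real.rpow_pos_of_pos two_pos _).le hx1 4
  have hyx : y ≤ x := by
    apply le_of_pow_le_pow_left₀ (n := 4) (by norm_num) hx0.le
    rw [hy4]; linarith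
  have ha : (0:ℝ) ≤ x + y := by linarith
  have hb : (0:ℝ) ≤ x - y := by linarith
  obtain ⟨p, hpdef⟩ : ∃ p : ℝ, p = (x + y) * (x - y) := ⟨_, rfl⟩
  have hp0 : 0 ≤ p := hpdef ▸ mul_nonneg ha hb
  have hQ : (x+y)^(4:ℕ) + (x-y)^(4:ℕ) = 8 - 6*p^2 := by
    rw [hpdef]; linear_combination (8:ℝ) * hy4
  set u : ℝ := (x + y) ^ ((4:ℝ)/3) with hudef
  set v : ℝ := (x - y) ^ ((4:ℝ)/3) with hvdef
  have hu0 : 0 ≤ u := Real.rpow_nonneg ha _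
  have hv0 : 0 ≤ v := Real.rpow_nonneg hb _
  have hu3 : u ^ (3:ℕ) = (x+y)^(4:ℕ) := by
    rw [hudef, ← Real.rpow_natCast ((x+y) ^ ((4:ℝ)/3)) 3, ← Real.rpow_mul ha,
      ← Real.rpow_natCast (x+y) 4]
    norm_num
  have hv3 : v ^ (3:ℕ) = (x-y)^(4:ℕ) := by
    rw [hvdef, ← Real.rpow_natCast ((x-y) ^ ((4:ℝ)/3)) 3, ← Real.rpow_mul hb,
      ← Real.rpow_natCast (x-y) 4]
    norm_num
  have huv : u * v = p ^ ((4:ℝ)/3) := by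
    rw [hudef, hvdef, hpdef, ← Real.mul_rpow ha hb]
  clear_value u v
  obtain ⟨P, hPdef⟩ : ∃ P : ℝ, P = p ^ ((4:ℝ)/3) := ⟨_, rfl⟩
  have hP0 : 0 ≤ P := hPdef ▸ Real.rpow_nonneg hp0 _
  rw [← hPdef] at huv
  obtain ⟨S, hSdef⟩ : ∃ S : ℝ, S = u + v := ⟨_, rfl⟩
  have hS0 : 0 ≤ S := hSdef ▸ add_nonneg hu0 hv0
  have hS3 : S ^ (3:ℕ) = ((x+y)^(4:ℕ) + (x-y)^(4:ℕ)) + 3 * P * S := by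
    have h : S ^ (3:ℕ) = u^(3:ℕ) + v^(3:ℕ) + 3 * (u*v) * S := by rw [hSdef]; ring
    rw [h, hu3, hv3, huv]
  have hPle : 4 * P ≤ S ^ 2 := by
    rw [← huv, hSdef]; nlinarith [sq_nonneg (u - v)]
  obtain ⟨M, hMdef⟩ : ∃ M : ℝ, M = (3:ℝ) ^ ((2:ℝ)/3) := ⟨_, rfl⟩
  have hM0 : 0 < M := hMdef ▸ Real.rpow_pos_of_pos (by norm_num) _
  have hM3 : M ^ (3:ℕ) = 9 := by
    rw [hMdef, ← Real.rpow_natCast ((3:ℝ) ^ ((2:ℝ)/3)) 3, ← Real.rpow_mul (by norm_num)]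
    rw [show ((2:ℝ)/3) * ((3:ℕ):ℝ) = ((2:ℕ):ℝ) by push_cast; ring]
    rw [Real.rpow_natCast]
    norm_num
  -- key inequality : 3 * P * M ≤ 1 + 6 * p^2
  have hKey : 3 * P * M ≤ 1 + 6 * p ^ 2 := by
    have h3PM : 3 * P * M = (3:ℝ) ^ ((5:ℝ)/3) * p ^ ((4:ℝ)/3) := by
      rw [hMdef, hPdef, show (5:ℝ)/3 = 1 + 2/3 by norm_num,
        Real.rpow_add (by norm_num : (0:ℝ) < 3), Real.rpow_one]
      ring
    rw [h3PM]
    have hc0 : 0 ≤ (3:ℝ) ^ ((5:ℝ)/3) * p ^ ((4:ℝ)/3) :=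
      mul_nonneg (Real.rpow_nonneg (by norm_num) _) (Real.rpow_nonneg hp0 _)
    have hd0 : (0:ℝ) ≤ 1 + 6 * p ^ 2 := by positivity
    have hc3 : ((3:ℝ) ^ ((5:ℝ)/3) * p ^ ((4:ℝ)/3)) ^ (3:ℕ) = 243 * p ^ (4:ℕ) := by
      rw [mul_pow, ← Real.rpow_natCast ((3:ℝ) ^ ((5:ℝ)/3)) 3,
        ← Real.rpow_mul (by norm_num : (0:ℝ) ≤ 3),
        ← Real.rpow_natCast (p ^ ((4:ℝ)/3)) 3, ← Real.rpow_mul hp0,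
        ← Real.rpow_natCast p 4,
        show ((5:ℝ)/3) * ((3:ℕ):ℝ) = ((5:ℕ):ℝ) by push_cast; ring,
        show ((4:ℝ)/3) * ((3:ℕ):ℝ) = ((4:ℕ):ℝ) by push_cast; ring,
        Real.rpow_natCast, Real.rpow_natCast]
      norm_num
    apply le_of_pow_le_pow_left₀ (n := 3) (by norm_num) hd0
    rw [hc3]
    nlinarith [mul_nonneg (sq_nonneg (3 * p^2 - 1)) (by positivity : (0:ℝ) ≤ 24 * p^2 + 1)]
  have hM_ineq : ((x+y)^(4:ℕ) + (x-y)^(4:ℕ)) + 3 * P * M ≤ M ^ (3:ℕ) := by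
    rw [hQ, hM3]; linarith
  have hSM : S ≤ M := by
    by_contra hcon
    push_neg at hcon
    have hSpos : 0 < S := lt_trans hM0 hcon
    have h1 : 0 ≤ (S - M) * (S^2 - 4*P) :=
      mul_nonneg (sub_pos.2 hcon).le (by linarith)
    have h2 : 0 < (S - M) * (S * M) :=
      mul_pos (sub_pos.2 hcon) (mul_pos hSpos hM0)
    have h3 : 0 < (S - M) * (M * M) :=
      mul_pos (sub_pos.2 hcon) (mul_pos hM0 hM0)
    have h4 : 0 < (S - M) * (S * S) :=
      mul_pos (sub_pos.2 hcon) (mul_pos hSpos hSpos)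
    have hE : (S - M) * (S^2 - 4*P) * (3/4) + (S - M) * (S * S) * (1/4)
        + (S - M) * (S * M) + (S - M) * (M * M)
        = S^(3:ℕ) - M^(3:ℕ) - 3*P*S + 3*P*M := by ring
    have h5 : S^(3:ℕ) - M^(3:ℕ) - 3*P*S + 3*P*M ≤ 0 := by linarith [hS3, hM_ineq]
    linarith [hE, h1, h2, h3, h4, h5]
  have hgoal : (u + v) ^ ((3:ℝ)/4) ≤ Real.sqrt 3 := by
    rw [← hSdef]
    calc S ^ ((3:ℝ)/4) ≤ M ^ ((3:ℝ)/4) := Real.rpow_le_rpow hS0 hSM (by norm_num)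
      _ = Real.sqrt 3 := by
        rw [hMdef, ← Real.rpow_mul (by norm_num : (0:ℝ) ≤ 3),
          show (2:ℝ)/3 * (3/4) = 1/2 by norm_num, ← Real.sqrt_eq_rpow]
  exact hgoal
end
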